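/- arXiv:2306.10824 — 4 statements merged into one kernel-verified Lean document; each statement's English description precedes it below -/
import Mathlib

section
/- Let D be a smooth, deterministic, decomposable PROB over finite variable set V representing Boolean formula F, with branch parameters at each decision node on variable x given by θ_hi = W(x)/(W(x)+W(¬x)) and θ_lo = W(¬x)/(W(x)+W(¬x)) for a positive literal weight function W. Then the joint probability P(D) computed bottom-up (false node ↦ 0, true node ↦ 1, decision node ↦ θ_lo·P(lo) + θ_hi·P(hi), conjunction node ↦ product of children) satisfies P(D) = (Σ_{τ ⊨ F} W(τ)) / (∏_{v ∈ V} (W(v) + W(¬v))), where W(τ) = ∏_{v} (if τ(v) then W(v) else W(¬v)). -/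
/-- A PROB (probabilistic OBDD[∧]): true/false leaves, decision nodes on a
variable with lo/hi children, and conjunction nodes with a list of children. -/
inductive PROB (V : Type) : Type where
  | tru : PROB V
  | fls : PROB V
  | dec (x : V) (lo hi : PROB V) : PROB V
  | conj (children : List (PROB V)) : PROB V

namespace PROB

variable {V : Type}

/-- The set of variables mentioned in the sub-PROB rooted at a node. -/
def vars [DecidableEq V] : PROB V → Finset V
  | .tru => ∅
  | .fls => ∅
  | .dec x lo hi => insert x (lo.vars ∪ hi.vars)
  | .conj cs => (cs.attach.map (fun c => c.1.vars)).foldr (· ∪ ·) ∅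
decreasing_by
  all_goals simp_wf
  all_goals try omega
  all_goals (have h := List.sizeOf_lt_of_mem c.2; omega)

/-- Whether an assignment τ satisfies the PROB: the traversal following τ at
decision nodes and visiting all children of conjunction nodes never reaches
the false node. -/
def satb : PROB V → (V → Bool) → Bool
  | .tru, _ => true
  | .fls, _ => false
  | .dec x lo hi, τ => if τ x then hi.satb τ else lo.satb τ
  | .conj cs, τ => cs.attach.all (fun c => c.1.satb τ)
decreasing_by
  all_goals simp_wf
  all_goals try omega
  all_goals (have h := List.sizeOf_lt_of_mem c.2; omega)

/-- Bottom-up joint probability annotation induced by a literal weight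
function `W` (with `W x true` the weight of literal `x` and `W x false` the
weight of `¬x`): false ↦ 0, true ↦ 1, decision node ↦ θ_lo·P(lo) + θ_hi·P(hi)
with normalized branch parameters, conjunction ↦ product of children. -/
noncomputable def jointP (W : V → Bool → ℝ) : PROB V → ℝ
  | .tru => 1
  | .fls => 0
  | .dec x lo hi =>
      (W x false / (W x true + W x false)) * jointP W lo +
      (W x true / (W x true + W x false)) * jointP W hi
  | .conj cs => (cs.attach.map (fun c => jointP W c.1)).prod
decreasing_by
  all_goals simp_wf
  all_goals try omega
  all_goals (have h := List.sizeOf_lt_of_mem c.2; omega)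

/-- Structural invariants of a PROB: determinism is inherent in the decision
semantics; decomposability: conjunction children have pairwise disjoint
variable sets; smoothness: both children of a decision node mention the same
variables; and the decision variable does not occur below the decision node. -/
inductive Wf [DecidableEq V] : PROB V → Prop
  | tru : Wf .tru
  | fls : Wf .fls
  | dec {x : V} {lo hi : PROB V} (hxlo : x ∉ lo.vars) (hxhi : x ∉ hi.vars)
      (hsmooth : lo.vars = hi.vars) (hlo : Wf lo) (hhi : Wf hi) :
      Wf (.dec x lo hi)
  | conj {cs : List (PROB V)} (h : ∀ c ∈ cs, Wf c)
      (hdecomp : cs.Pairwise (fun a b => Disjoint a.vars b.vars)) :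
      Wf (.conj cs)

end PROB

namespace PROBAux
open Finset PROB
variable {V : Type} [DecidableEq V]

lemma mem_foldr_union {a : V} : ∀ (l : List (Finset V)),
    (a ∈ l.foldr (· ∪ ·) ∅ ↔ ∃ t ∈ l, a ∈ t)
  | [] => by simp
  | t :: l => by simp [mem_foldr_union l]

lemma mem_vars_conj {a : V} {cs : List (PROB V)} :
    a ∈ (PROB.conj cs).vars ↔ ∃ c ∈ cs, a ∈ c.vars := by
  rw [PROB.vars, mem_foldr_union]
  simp

lemma satb_congr : ∀ (n : ℕ) (D : PROB V), sizeOf D ≤ n → ∀ τ τ' : V → Bool,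
    (∀ v ∈ D.vars, τ v = τ' v) → D.satb τ = D.satb τ' := by
  intro n
  induction n with
  | zero => intro D h; exfalso; cases D <;> simp at h
  | succ n ih =>
    intro D hD τ τ' hvv
    cases D with
    | tru => simp [satb]
    | fls => simp [satb]
    | dec x lo hi =>
      have hx : τ x = τ' x := hvv x (by simp [vars])
      have hlo : lo.satb τ = lo.satb τ' := by
        apply ih lo (by simp at hD; omega)
        intro v hv; exact hvv v (by simp [vars, hv])
      have hhi : hi.satb τ = hi.satb τ' := by
        apply ih hi (by simp at hD; omega)
        intro v hv; exact hvv v (by simp [vars, hv])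
      rw [satb, satb, hx, hlo, hhi]
    | conj cs =>
      rw [satb, satb, Bool.eq_iff_iff]
      simp only [List.all_eq_true]
      constructor <;> intro h c hc
      · rw [← ih c.1 ?_ τ τ' ?_]
        · exact h c hc
        · have h1 := List.sizeOf_lt_of_mem c.2
          simp at hD; omega
        · intro v hv; exact hvv v (mem_vars_conj.mpr ⟨c.1, c.2, hv⟩)
      · rw [ih c.1 ?_ τ τ' ?_]
        · exact h c hc
        · have h1 := List.sizeOf_lt_of_mem c.2
          simp at hD; omega
        · intro v hv; exact hvv v (mem_vars_conj.mpr ⟨c.1, c.2, hv⟩)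
end PROBAux

namespace PROBAux
open Finset
variable {V : Type} [DecidableEq V]

lemma sum_prod_bool {β : Type} [Fintype β] [DecidableEq β] (U : β → Bool → ℝ) :
    ∑ τ : β → Bool, ∏ v, U v (τ v) = ∏ v, (U v true + U v false) := by
  rw [← Fintype.piFinset_univ, ← Finset.prod_univ_sum]
  simp [Fintype.sum_bool]

noncomputable def glue (s : Finset V)
    (p : ({v // v ∈ s} → Bool) × ({v // v ∉ s} → Bool)) : V → Bool :=
  fun v => if h : v ∈ s then p.1 ⟨v, h⟩ else p.2 ⟨v, h⟩

noncomputable def glueEquiv (s : Finset V) :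
    (({v // v ∈ s} → Bool) × ({v // v ∉ s} → Bool)) ≃ (V → Bool) where
  toFun := glue s
  invFun τ := (fun v => τ v.1, fun v => τ v.1)
  left_inv p := by
    ext v
    · simp [glue, v.2]
    · simp [glue, v.2]
  right_inv τ := by
    funext v
    simp only [glue]
    split <;> rfl

lemma factor (W : V → Bool → ℝ) [Fintype V] (s : Finset V) (f g : (V → Bool) → ℝ)
    (hf : ∀ τ τ' : V → Bool, (∀ v ∈ s, τ v = τ' v) → f τ = f τ')
    (hg : ∀ τ τ' : V → Bool, (∀ v, v ∉ s → τ v = τ' v) → g τ = g τ') :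
    (∑ τ : V → Bool, f τ * g τ * ∏ v, W v (τ v)) * (∏ v, (W v true + W v false)) =
      (∑ τ : V → Bool, f τ * ∏ v, W v (τ v)) *
        (∑ τ : V → Bool, g τ * ∏ v, W v (τ v)) := by
  classical
  set A := {v // v ∈ s}
  set B := {v // v ∉ s}
  -- helper values
  set a₀ : A → Bool := fun _ => false with ha₀
  set b₀ : B → Bool := fun _ => false with hb₀
  set F : (A → Bool) → ℝ := fun a => f (glue s (a, b₀)) with hF
  set G : (B → Bool) → ℝ := fun b => g (glue s (a₀, b)) with hG
  set P : (A → Bool) → ℝ := fun a => ∏ v ∈ s, W v (glue s (a, b₀) v) with hP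
  set Q : (B → Bool) → ℝ := fun b => ∏ v ∈ sᶜ, W v (glue s (a₀, b) v) with hQ
  have hfg : ∀ a b, f (glue s (a, b)) = F a := by
    intro a b
    apply hf
    intro v hv
    simp [glue, hv]
  have hgg : ∀ a b, g (glue s (a, b)) = G b := by
    intro a b
    apply hg
    intro v hv
    simp [glue, hv]
  have hprod : ∀ a b, (∏ v, W v (glue s (a, b) v)) = P a * Q b := by
    intro a b
    rw [← Finset.prod_mul_prod_compl s]
    congr 1
    · apply Finset.prod_congr rfl
      intro v hv
      simp [glue, hv]
    · apply Finset.prod_congr rfl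
      intro v hv
      simp only [Finset.mem_compl] at hv
      simp [glue, hv]
  have key : ∀ (h : (V → Bool) → ℝ), (∑ τ : V → Bool, h τ) =
      ∑ a : A → Bool, ∑ b : B → Bool, h (glue s (a, b)) := by
    intro h
    rw [← Equiv.sum_comp (glueEquiv s) h, Fintype.sum_prod_type]
    rfl
  have hZ : (∏ v, (W v true + W v false)) = (∑ a : A → Bool, P a) * (∑ b : B → Bool, Q b) := by
    rw [← sum_prod_bool W, key (fun τ => ∏ v, W v (τ v))]
    simp only [hprod]
    rw [← Finset.sum_mul_sum]
  rw [key (fun τ => f τ * g τ * ∏ v, W v (τ v)),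
      key (fun τ => f τ * ∏ v, W v (τ v)),
      key (fun τ => g τ * ∏ v, W v (τ v)), hZ]
  simp only [hfg, hgg, hprod]
  have e1 : ∑ a : A → Bool, ∑ b : B → Bool, F a * G b * (P a * Q b) =
      (∑ a : A → Bool, F a * P a) * (∑ b : B → Bool, G b * Q b) := by
    rw [Finset.sum_mul_sum]
    apply Finset.sum_congr rfl; intro a _
    apply Finset.sum_congr rfl; intro b _
    ring
  have e2 : ∑ a : A → Bool, ∑ b : B → Bool, F a * (P a * Q b) =
      (∑ a : A → Bool, F a * P a) * (∑ b : B → Bool, Q b) := by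
    rw [Finset.sum_mul_sum]
    apply Finset.sum_congr rfl; intro a _
    apply Finset.sum_congr rfl; intro b _
    ring
  have e3 : ∑ a : A → Bool, ∑ b : B → Bool, G b * (P a * Q b) =
      (∑ a : A → Bool, P a) * (∑ b : B → Bool, G b * Q b) := by
    rw [Finset.sum_mul_sum]
    apply Finset.sum_congr rfl; intro a _
    apply Finset.sum_congr rfl; intro b _
    ring
  rw [e1, e2, e3]
  ring
end PROBAux

namespace PROBAux2
open Finset PROBAux
variable {V : Type} [DecidableEq V]

lemma sum_indicator_x (W : V → Bool → ℝ) [Fintype V] (x : V) (c : Bool) :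
    ∑ τ : V → Bool, (if τ x = c then (1:ℝ) else 0) * ∏ v, W v (τ v) =
      W x c * ∏ v ∈ Finset.univ.erase x, (W v true + W v false) := by
  classical
  have hpt : ∀ τ : V → Bool, (if τ x = c then (1:ℝ) else 0) * ∏ v, W v (τ v) =
      ∏ v, (fun v b => if v = x then (if b = c then W v b else 0) else W v b) v (τ v) := by
    intro τ
    by_cases h : τ x = c
    · simp only [h, if_true, one_mul]
      apply Finset.prod_congr rfl
      intro v _
      by_cases hv : v = x
      · subst hv; simp [h]
      · simp [hv]
    · rw [if_neg h, zero_mul]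
      symm
      apply Finset.prod_eq_zero (Finset.mem_univ x)
      simp [h]
  rw [Finset.sum_congr rfl (fun τ _ => hpt τ),
    sum_prod_bool (fun v b => if v = x then if b = c then W v b else 0 else W v b)]
  rw [← Finset.mul_prod_erase Finset.univ _ (Finset.mem_univ x)]
  congr 1
  · cases c <;> simp
  · apply Finset.prod_congr rfl
    intro v hv
    simp [Finset.mem_erase.mp hv |>.1]
end PROBAux2

namespace PROBAux3
open Finset PROB PROBAux PROBAux2
variable {V : Type} [DecidableEq V]

lemma jointP_conj_cons (W : V → Bool → ℝ) (c : PROB V) (cs : List (PROB V)) :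
    (PROB.conj (c :: cs)).jointP W = c.jointP W * (PROB.conj cs).jointP W := by
  rw [jointP, jointP]
  simp [List.attach_cons, List.map_map, Function.comp]

lemma satb_conj (cs : List (PROB V)) (τ : V → Bool) :
    ((PROB.conj cs).satb τ = true) ↔ ∀ c ∈ cs, c.satb τ = true := by
  rw [satb, List.all_eq_true]
  constructor
  · intro h c hc; exact h ⟨c, hc⟩ (List.mem_attach _ _)
  · intro h c _; exact h c.1 c.2

lemma satb_conj_cons (c : PROB V) (cs : List (PROB V)) (τ : V → Bool) :
    (PROB.conj (c :: cs)).satb τ = (c.satb τ && (PROB.conj cs).satb τ) := by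
  rw [Bool.eq_iff_iff, satb_conj, Bool.and_eq_true, satb_conj]
  simp [List.forall_mem_cons]

lemma main (W : V → Bool → ℝ) [Fintype V] (hW : ∀ v b, 0 < W v b) :
    ∀ (n : ℕ) (D : PROB V), sizeOf D ≤ n → D.Wf →
      (∑ τ : V → Bool, (if D.satb τ = true then (1:ℝ) else 0) * ∏ v, W v (τ v)) =
        D.jointP W * ∏ v, (W v true + W v false) := by
  have hZ : (0:ℝ) < ∏ v, (W v true + W v false) := by
    apply Finset.prod_pos
    intro v _
    have := hW v true; have := hW v false; linarith
  intro n
  induction n with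
  | zero => intro D h; exfalso; cases D <;> simp at h
  | succ n ih =>
    intro D hD hWf
    cases hWf with
    | tru =>
      rw [jointP, one_mul, ← sum_prod_bool W]
      apply Finset.sum_congr rfl
      intro τ _
      rw [satb]
      simp
    | fls =>
      rw [jointP, zero_mul]
      apply Finset.sum_eq_zero
      intro τ _
      rw [satb]
      simp
    | @dec x lo hi hxlo hxhi hsmooth hlo hhi =>
      have hslo : sizeOf lo ≤ n := by simp at hD; omega
      have hshi : sizeOf hi ≤ n := by simp at hD; omega
      have hpt : ∀ τ : V → Bool,
          (if (PROB.dec x lo hi).satb τ = true then (1:ℝ) else 0) * ∏ v, W v (τ v) =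
          ((if hi.satb τ = true then (1:ℝ) else 0) * (if τ x = true then (1:ℝ) else 0)
              * ∏ v, W v (τ v)) +
          ((if lo.satb τ = true then (1:ℝ) else 0) * (if τ x = false then (1:ℝ) else 0)
              * ∏ v, W v (τ v)) := by
        intro τ
        rw [satb]
        cases h : τ x <;> simp [h]
      rw [Finset.sum_congr rfl (fun τ _ => hpt τ), Finset.sum_add_distrib]
      have hfhi : ∀ τ τ' : V → Bool, (∀ v ∈ hi.vars, τ v = τ' v) →
          (if hi.satb τ = true then (1:ℝ) else 0) = (if hi.satb τ' = true then (1:ℝ) else 0) := by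
        intro τ τ' h
        rw [satb_congr (sizeOf hi) hi le_rfl τ τ' h]
      have hflo : ∀ τ τ' : V → Bool, (∀ v ∈ lo.vars, τ v = τ' v) →
          (if lo.satb τ = true then (1:ℝ) else 0) = (if lo.satb τ' = true then (1:ℝ) else 0) := by
        intro τ τ' h
        rw [satb_congr (sizeOf lo) lo le_rfl τ τ' h]
      have Shi := factor W hi.vars (fun τ => if hi.satb τ = true then (1:ℝ) else 0)
        (fun τ => if τ x = true then (1:ℝ) else 0) hfhi
        (fun τ τ' h => by simp only [h x hxhi])
      have Slo := factor W lo.vars (fun τ => if lo.satb τ = true then (1:ℝ) else 0)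
        (fun τ => if τ x = false then (1:ℝ) else 0) hflo
        (fun τ τ' h => by simp only [h x hxlo])
      rw [ih hi hshi hhi, sum_indicator_x W x true] at Shi
      rw [ih lo hslo hlo, sum_indicator_x W x false] at Slo
      have ehi : (∑ τ : V → Bool, (if hi.satb τ = true then (1:ℝ) else 0) *
            (if τ x = true then (1:ℝ) else 0) * ∏ v, W v (τ v)) =
          hi.jointP W * (W x true * ∏ v ∈ Finset.univ.erase x, (W v true + W v false)) := by
        apply mul_right_cancel₀ hZ.ne'
        rw [Shi]; ring
      have elo : (∑ τ : V → Bool, (if lo.satb τ = true then (1:ℝ) else 0) *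
            (if τ x = false then (1:ℝ) else 0) * ∏ v, W v (τ v)) =
          lo.jointP W * (W x false * ∏ v ∈ Finset.univ.erase x, (W v true + W v false)) := by
        apply mul_right_cancel₀ hZ.ne'
        rw [Slo]; ring
      rw [ehi, elo, jointP]
      rw [← Finset.mul_prod_erase Finset.univ _ (Finset.mem_univ x)]
      have hs : W x true + W x false ≠ 0 := by
        have := hW x true; have := hW x false; linarith
      field_simp
      ring
    | @conj cs hall hdecomp =>
      cases cs with
      | nil =>
        rw [jointP]
        simp only [List.attach_nil, List.map_nil, List.prod_nil, one_mul]
        rw [← sum_prod_bool W]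
        apply Finset.sum_congr rfl
        intro τ _
        rw [satb]
        simp
      | cons c cs' =>
        have hsc : sizeOf c ≤ n := by simp at hD; omega
        have hscs : sizeOf (PROB.conj cs') ≤ n := by simp at hD ⊢; omega
        have hdisj : ∀ v ∈ (PROB.conj cs').vars, v ∉ c.vars := by
          intro v hv
          obtain ⟨c', hc', hvc'⟩ := mem_vars_conj.mp hv
          have := (List.pairwise_cons.mp hdecomp).1 c' hc'
          exact fun hvc => Finset.disjoint_left.mp this hvc hvc'
        have hpt : ∀ τ : V → Bool,
            (if (PROB.conj (c :: cs')).satb τ = true then (1:ℝ) else 0) * ∏ v, W v (τ v) =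
            (if c.satb τ = true then (1:ℝ) else 0) *
              (if (PROB.conj cs').satb τ = true then (1:ℝ) else 0) * ∏ v, W v (τ v) := by
          intro τ
          rw [satb_conj_cons]
          cases h1 : c.satb τ <;> cases h2 : (PROB.conj cs').satb τ <;> simp [h1, h2]
        rw [Finset.sum_congr rfl (fun τ _ => hpt τ)]
        have hfc : ∀ τ τ' : V → Bool, (∀ v ∈ c.vars, τ v = τ' v) →
            (if c.satb τ = true then (1:ℝ) else 0) = (if c.satb τ' = true then (1:ℝ) else 0) := by
          intro τ τ' h
          rw [satb_congr (sizeOf c) c le_rfl τ τ' h]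
        have hgc : ∀ τ τ' : V → Bool, (∀ v, v ∉ c.vars → τ v = τ' v) →
            (if (PROB.conj cs').satb τ = true then (1:ℝ) else 0) =
              (if (PROB.conj cs').satb τ' = true then (1:ℝ) else 0) := by
          intro τ τ' h
          rw [satb_congr (sizeOf (PROB.conj cs')) _ le_rfl τ τ'
            (fun v hv => h v (hdisj v hv))]
        have S := factor W c.vars (fun τ => if c.satb τ = true then (1:ℝ) else 0)
          (fun τ => if (PROB.conj cs').satb τ = true then (1:ℝ) else 0) hfc hgc
        rw [ih c hsc (hall c (by simp)),
            ih (PROB.conj cs') hscs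
              (Wf.conj (fun d hd => hall d (by simp [hd])) (List.pairwise_cons.mp hdecomp).2)] at S
        apply mul_right_cancel₀ hZ.ne'
        rw [S, jointP_conj_cons]
        ring
end PROBAux3

/-- Proposition: the joint probability of a smooth, deterministic,
decomposable PROB representing `F` over variable set `V` equals the weighted
model count of `F` divided by `∏ v (W(v) + W(¬v))`. -/
theorem stmt_7 {V : Type} [Fintype V] [DecidableEq V]
    (D : PROB V) (hD : D.Wf) (hvars : D.vars = Finset.univ)
    (W : V → Bool → ℝ) (hW : ∀ v b, 0 < W v b) :
    D.jointP W =
      (∑ τ ∈ Finset.univ.filter (fun τ : V → Bool => D.satb τ = true),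
        ∏ v : V, W v (τ v)) /
      ∏ v : V, (W v true + W v false) := by
  have hZ : (0:ℝ) < ∏ v, (W v true + W v false) := by
    apply Finset.prod_pos
    intro v _
    have := hW v true; have := hW v false; linarith
  have hmain := PROBAux3.main W hW (sizeOf D) D le_rfl hD
  rw [Finset.sum_filter]
  rw [eq_div_iff hZ.ne', ← hmain]
  apply Finset.sum_congr rfl
  intro τ _
  by_cases h : D.satb τ = true <;> simp [h]
end

section
/- With uniform weights W(x) = W(¬x) = 1 for all variables, the joint probability P(D) of a smooth, deterministic, decomposable PROB D over n variables representing formula F equals |{τ : τ ⊨ F}| / 2^n, i.e., the model count of F divided by 2^n. -/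
/-! Under the uniform distribution on assignments, the probability that a node's formula holds
obeys the same bottom-up recursion as `jointP` with uniform weights: the variable of a decision node
is a fair coin independent of the sub-diagrams below it, which do not mention it, and the children
of a conjunction node mention disjoint sets of variables, so their events are independent and
their probabilities multiply. -/

open Finset

section UniformProb

variable {V : Type*} [Fintype V] [DecidableEq V]

noncomputable def uniformProb (f : (V → Bool) → Bool) : ℝ :=
  #{τ | f τ = true} / 2 ^ Fintype.card V

theorem uniformProb_true : uniformProb (fun _ : V → Bool => true) = 1 := by
  simp [uniformProb]

theorem uniformProb_false : uniformProb (fun _ : V → Bool => false) = 0 := by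
  simp [uniformProb]

/-- The involution `(τ, σ) ↦ (s.piecewise τ σ, s.piecewise σ τ)` matches pairs (model of `f ∧ g`,
arbitrary assignment) with pairs (model of `f`, model of `g`). -/
theorem card_filter_and_mul_card_univ {f g : (V → Bool) → Bool} {s t : Set V}
    (hf : DependsOn f s) (hg : DependsOn g t) (hst : Disjoint s t) :
    #{τ | (f τ && g τ) = true} * 2 ^ Fintype.card V = #{τ | f τ = true} * #{τ | g τ = true} := by
  classical
  have hf_pw : ∀ τ σ, f (s.piecewise τ σ) = f τ := fun τ σ =>
    hf fun i hi => Set.piecewise_eq_of_mem _ _ _ hi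
  have hg_pw : ∀ τ σ, g (s.piecewise τ σ) = g σ := fun τ σ =>
    hg fun i hi => Set.piecewise_eq_of_notMem _ _ _ (hst.notMem_of_mem_right hi)
  let swap (p : (V → Bool) × (V → Bool)) := (s.piecewise p.1 p.2, s.piecewise p.2 p.1)
  have hswap : ∀ p, swap (swap p) = p := fun p => by
    ext i <;> by_cases hi : i ∈ s <;> simp [swap, hi]
  rw [← Fintype.card_bool, ← Fintype.card_fun, ← card_univ, ← card_product, ← card_product]
  refine card_nbij' swap swap ?_ ?_ (fun p _ => hswap p) (fun p _ => hswap p) <;>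
    rintro ⟨τ, σ⟩ hp <;> simpa [swap, hf_pw, hg_pw] using hp

theorem uniformProb_and {f g : (V → Bool) → Bool} {s t : Set V}
    (hf : DependsOn f s) (hg : DependsOn g t) (hst : Disjoint s t) :
    uniformProb (fun τ => f τ && g τ) = uniformProb f * uniformProb g := by
  have h := card_filter_and_mul_card_univ hf hg hst
  simp only [uniformProb]
  field_simp
  exact_mod_cast h

theorem two_mul_card_filter_apply_eq_and {g : (V → Bool) → Bool} {s : Set V} {x : V}
    (hg : DependsOn g s) (hx : x ∉ s) (b : Bool) :
    2 * #{τ | τ x = b ∧ g τ = true} = #{τ | g τ = true} := by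
  let flip (τ : V → Bool) := Function.update τ x (!τ x)
  have hflip : ∀ τ, flip (flip τ) = τ := fun τ => by
    ext y; by_cases hy : y = x
    · subst hy; simp [flip]
    · simp [flip, hy]
  have hflip_x : ∀ τ, flip τ x = !τ x := by simp [flip]
  have hg_flip : ∀ τ, g (flip τ) = g τ := fun τ =>
    hg fun i hi => Function.update_of_ne (ne_of_mem_of_not_mem hi hx) _ _
  have hcard : #{τ | τ x = b ∧ g τ = true} = #{τ | τ x = !b ∧ g τ = true} := by
    refine card_nbij' flip flip ?_ ?_ (fun τ _ => hflip τ) (fun τ _ => hflip τ) <;>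
      intro τ hτ <;> simp_all
  calc 2 * #{τ | τ x = b ∧ g τ = true}
      = #{τ | τ x = b ∧ g τ = true} + #{τ | τ x = !b ∧ g τ = true} := by rw [← hcard]; ring
    _ = #{τ | g τ = true} := by
      rw [← card_filter_add_card_filter_not (s := {τ | g τ = true}) (fun τ => τ x = b)]
      cases b <;> simp [filter_filter, and_comm]

theorem uniformProb_ite {g h : (V → Bool) → Bool} {s t : Set V} {x : V}
    (hg : DependsOn g s) (hh : DependsOn h t) (hxs : x ∉ s) (hxt : x ∉ t) :
    uniformProb (fun τ => if τ x then g τ else h τ) = (uniformProb h + uniformProb g) / 2 := by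
  have hsplit : #{τ | (if τ x then g τ else h τ) = true}
      = #{τ | τ x = true ∧ g τ = true} + #{τ | τ x = false ∧ h τ = true} := by
    rw [← card_union_of_disjoint (disjoint_filter.2 fun τ _ h₁ h₂ => by simp_all)]
    congr 1; ext τ; cases hτ : τ x <;> simp [hτ]
  have hg₂ := two_mul_card_filter_apply_eq_and hg hxs true
  have hh₂ := two_mul_card_filter_apply_eq_and hh hxt false
  simp only [uniformProb, hsplit]
  field_simp
  rw [← hg₂, ← hh₂]
  push_cast
  ring

end UniformProb

namespace PROB

variable {V : Type}

theorem satb_conj (cs : List (PROB V)) (τ : V → Bool) :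
    (conj cs).satb τ = cs.all (·.satb τ) := by
  rw [satb, Bool.eq_iff_iff]
  simp

theorem jointP_conj (W : V → Bool → ℝ) (cs : List (PROB V)) :
    (conj cs).jointP W = (cs.map (jointP W)).prod := by
  rw [jointP, List.attach_map_val]

section DecidableEq

variable [DecidableEq V]

theorem vars_conj (cs : List (PROB V)) : (conj cs).vars = (cs.map vars).foldr (· ∪ ·) ∅ := by
  rw [vars, List.attach_map_val]

theorem subset_vars_conj {c : PROB V} {cs : List (PROB V)} (hc : c ∈ cs) :
    c.vars ⊆ (conj cs).vars := by
  induction cs with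
  | nil => simp at hc
  | cons d cs ih =>
    rw [vars_conj, List.map_cons, List.foldr_cons, ← vars_conj]
    rcases List.mem_cons.1 hc with rfl | hc
    · exact subset_union_left
    · exact (ih hc).trans subset_union_right

theorem disjoint_vars_conj {s : Finset V} {cs : List (PROB V)} :
    Disjoint s (conj cs).vars ↔ ∀ c ∈ cs, Disjoint s c.vars := by
  induction cs with
  | nil => simp [vars_conj]
  | cons c cs ih =>
    rw [vars_conj, List.map_cons, List.foldr_cons, ← vars_conj]
    simp [ih]

theorem dependsOn_satb : ∀ D : PROB V, DependsOn D.satb (D.vars : Set V)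
  | .tru, _, _, _ => by rw [satb, satb]
  | .fls, _, _, _ => by rw [satb, satb]
  | .dec x lo hi, τ, σ, h => by
    have hvars : (dec x lo hi).vars = insert x (lo.vars ∪ hi.vars) := by rw [vars]
    simp only [hvars, coe_insert, coe_union, Set.mem_insert_iff, Set.mem_union,
      forall_eq_or_imp] at h
    rw [satb, satb, h.1, dependsOn_satb lo fun i hi => h.2 i (Or.inl hi),
      dependsOn_satb hi fun i hi => h.2 i (Or.inr hi)]
  | .conj cs, τ, σ, h => by
    rw [satb_conj, satb_conj, Bool.eq_iff_iff]
    simp only [List.all_eq_true]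
    refine forall₂_congr fun c hc => ?_
    rw [dependsOn_satb c fun i hi => h i (subset_vars_conj hc hi)]
termination_by D => sizeOf D
decreasing_by
  all_goals simp_wf
  all_goals try omega
  all_goals (have := List.sizeOf_lt_of_mem hc; omega)

theorem jointP_one_eq_uniformProb [Fintype V] {D : PROB V} (hD : D.Wf) :
    D.jointP (fun _ _ => 1) = uniformProb D.satb := by
  induction hD with
  | tru =>
    rw [jointP, show tru.satb = fun _ => true from funext fun _ => by rw [satb], uniformProb_true]
  | fls =>
    rw [jointP, show fls.satb = fun _ => false from funext fun _ => by rw [satb], uniformProb_false]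
  | @dec x lo hi hxlo hxhi _ _ _ ih_lo ih_hi =>
    have hsatb : (dec x lo hi).satb = fun τ => if τ x then hi.satb τ else lo.satb τ :=
      funext fun _ => by rw [satb]
    rw [jointP, hsatb, uniformProb_ite (dependsOn_satb hi) (dependsOn_satb lo) (mod_cast hxhi)
      (mod_cast hxlo), ih_lo, ih_hi]
    ring
  | @conj cs hwf hdecomp ih =>
    induction cs with
    | nil =>
      rw [jointP_conj, List.map_nil, List.prod_nil,
        show (conj []).satb = fun _ => true from funext fun τ => by rw [satb_conj]; rfl,
        uniformProb_true]
    | cons c cs ih_cs =>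
      obtain ⟨hc_disj, hdecomp⟩ := List.pairwise_cons.1 hdecomp
      have hsatb : (conj (c :: cs)).satb = fun τ => c.satb τ && (conj cs).satb τ :=
        funext fun τ => by rw [satb_conj, satb_conj, List.all_cons]
      rw [jointP_conj, List.map_cons, List.prod_cons, ← jointP_conj, hsatb,
        uniformProb_and (dependsOn_satb c) (dependsOn_satb _)
          (disjoint_coe.2 (disjoint_vars_conj.2 hc_disj)),
        ih c List.mem_cons_self, ih_cs (fun d hd => hwf d (.tail c hd)) hdecomp
          fun d hd => ih d (.tail c hd)]

end DecidableEq

end PROB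

theorem stmt_8_general {V : Type} [Fintype V] [DecidableEq V]
    (D : PROB V) (hD : D.Wf) :
    D.jointP (fun _ _ => (1 : ℝ)) =
      ((Finset.univ.filter (fun τ : V → Bool => D.satb τ = true)).card : ℝ) /
        2 ^ (Fintype.card V) :=
  PROB.jointP_one_eq_uniformProb hD

/-- With uniform weights `W(x) = W(¬x) = 1` (so every branch parameter is
1/2), the joint probability of a smooth, deterministic, decomposable PROB `D`
over `n` variables equals the model count of the formula it represents
divided by `2 ^ n`. -/
theorem stmt_8 {V : Type} [Fintype V] [DecidableEq V]
    (D : PROB V) (hD : D.Wf) (hvars : D.vars = Finset.univ) :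
    D.jointP (fun _ _ => (1 : ℝ)) =
      ((Finset.univ.filter (fun τ : V → Bool => D.satb τ = true)).card : ℝ) /
        2 ^ (Fintype.card V) :=
  stmt_8_general D hD
end

section
/- The smoothing transformation on a PROB preserves the represented Boolean function: if at a decision node n with Vars(hi(n)) \ Vars(lo(n)) = {v₁,…,v_m} the lo-child is replaced by a conjunction of the old lo-child with m fresh decision nodes on v₁,…,v_m each having both children equal to the true node (and symmetrically for the hi-child), then the set of satisfying assignments of the PROB (restricted to the full variable set) is unchanged. -/
/-- The smoothing step preserves the represented Boolean function: at a
decision node on `x`, replacing the lo-child by a conjunction of the old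
lo-child with don't-care decision nodes (both children the true node) on the
variables missing from it (those in `Vars(hi) \ Vars(lo)`), and symmetrically
for the hi-child, leaves the set of satisfying assignments unchanged. -/
theorem stmt_12 {V : Type} [DecidableEq V] (x : V) (lo hi : PROB V)
    (vs ws : List V)
    (hvs : vs.toFinset = hi.vars \ lo.vars)
    (hws : ws.toFinset = lo.vars \ hi.vars) :
    ∀ τ : V → Bool,
      (PROB.dec x
        (PROB.conj (lo :: vs.map (fun v => PROB.dec v PROB.tru PROB.tru)))
        (PROB.conj (hi :: ws.map (fun v => PROB.dec v PROB.tru PROB.tru)))).satb τ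
      = (PROB.dec x lo hi).satb τ := by
  intro τ
  have hT : (PROB.tru : PROB V).satb τ = true := by rw [PROB.satb.eq_def]
  have hdec : ∀ (a b : PROB V) (v : V),
      (PROB.dec v a b).satb τ = (if τ v then b.satb τ else a.satb τ) := by
    intro a b v; rw [PROB.satb.eq_def]
  have hconj : ∀ cs : List (PROB V),
      (PROB.conj cs).satb τ = cs.attach.all (fun c => c.1.satb τ) := by
    intro cs; rw [PROB.satb.eq_def]
  have htru : ∀ v : V, (PROB.dec v PROB.tru PROB.tru).satb τ = true := by
    intro v; rw [hdec]; split <;> exact hT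
  have key : ∀ (t : PROB V) (l : List V),
      (PROB.conj (t :: l.map (fun v => PROB.dec v PROB.tru PROB.tru))).satb τ = t.satb τ := by
    intro t l
    rw [hconj]
    apply Bool.eq_iff_iff.mpr
    simp only [List.all_eq_true, List.mem_attach, true_implies, Subtype.forall, List.mem_cons]
    constructor
    · intro h; exact h t (Or.inl rfl)
    · intro h c hc
      rcases hc with rfl | hc
      · exact h
      · rcases List.mem_map.mp hc with ⟨v, _, rfl⟩
        exact htru v
  rw [hdec, hdec, key, key]
end

section
/- Let μ₁, …, μ_k be probability distributions on finite sets S₁, …, S_k, and let samples be drawn independently from each. For finite sets of assignments over pairwise disjoint variable sets with the combination map (τ₁,…,τ_k) ↦ τ₁ ∪ ⋯ ∪ τ_k a bijection onto S, the pushforward of the product distribution under this map assigns to each combined assignment τ the probability ∏ᵢ μᵢ(τᵢ). If each μᵢ is W-proportional on Sᵢ for a multiplicative positive weight W, the pushforward is W-proportional on S. -/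
/-- Combine assignments on the pieces `X i` of a cover of `V` into a single
assignment on `V`, evaluating `v` via (some) index whose piece contains it. -/
noncomputable def combine {V : Type*} {ι : Type*} (X : ι → Finset V)
    (hcover : ∀ v : V, ∃ i : ι, v ∈ X i)
    (f : ∀ i : ι, {v // v ∈ X i} → Bool) (v : V) : Bool :=
  f (hcover v).choose ⟨v, (hcover v).choose_spec⟩

/-!
Since the pieces `X i` partition `V`, `combine` is a bijection from families of local
assignments onto global ones, so the pushforward of the product distribution is read off
pointwise. A weight `∏ v, W v (τ v)` that is multiplicative over the variables splits along
the partition, hence the product of the local normalising constants is the global one, and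
`∏ i, (wᵢ / Zᵢ) = (∏ i, wᵢ) / (∏ i, Zᵢ)`.
-/

open Finset

section Partition

variable {V ι : Type*} {X : ι → Finset V}

theorem prod_eq_prod_prod_of_partition {M : Type*} [CommMonoid M] [Fintype V] [Fintype ι]
    [DecidableEq V] (hdisj : Pairwise (fun i j => Disjoint (X i) (X j)))
    (hcover : ∀ v : V, ∃ i : ι, v ∈ X i) (F : V → M) :
    ∏ v, F v = ∏ i, ∏ v : {v // v ∈ X i}, F v := by
  have huniv : (univ : Finset V) = univ.biUnion X := by
    ext v
    simpa using hcover v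
  rw [huniv, prod_biUnion fun i _ j _ hij => hdisj hij]
  exact prod_congr rfl fun i _ => (prod_coe_sort (X i) F).symm

variable (hdisj : Pairwise (fun i j => Disjoint (X i) (X j)))
  (hcover : ∀ v : V, ∃ i : ι, v ∈ X i)
include hdisj

theorem combine_apply (f : ∀ i : ι, {v // v ∈ X i} → Bool) {v : V} {i : ι} (hv : v ∈ X i) :
    combine X hcover f v = f i ⟨v, hv⟩ := by
  obtain rfl : (hcover v).choose = i := by
    by_contra h
    exact disjoint_left.mp (hdisj h) (hcover v).choose_spec hv
  rfl

theorem combine_injective : Function.Injective (combine X hcover) := by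
  intro f g h
  funext i v
  simpa [combine_apply hdisj hcover _ v.2] using congrFun h v.1

theorem filter_combine_eq_combine [Fintype V] [DecidableEq V] [Fintype ι] [DecidableEq ι]
    (f : ∀ i : ι, {v // v ∈ X i} → Bool) :
    univ.filter (fun g => combine X hcover g = combine X hcover f) = {f} := by
  ext g
  simp [(combine_injective hdisj hcover).eq_iff]

theorem prod_combine {M : Type*} [CommMonoid M] [Fintype V] [DecidableEq V] [Fintype ι]
    (W : V → Bool → M) (f : ∀ i : ι, {v // v ∈ X i} → Bool) :
    ∏ v, W v (combine X hcover f v) = ∏ i, ∏ v : {v // v ∈ X i}, W v (f i v) := by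
  rw [prod_eq_prod_prod_of_partition hdisj hcover]
  exact prod_congr rfl fun i _ => prod_congr rfl fun v _ => by
    rw [combine_apply hdisj hcover f v.2]

omit hdisj in
theorem filter_exists_pi_combine_eq [Fintype V] [DecidableEq V] [Fintype ι] [DecidableEq ι]
    (S : ∀ i : ι, Finset ({v // v ∈ X i} → Bool)) :
    univ.filter (fun τ : V → Bool =>
        ∃ f ∈ univ.pi (fun i : ι => S i), combine X hcover (fun i => f i (mem_univ i)) = τ) =
      (Fintype.piFinset S).image (combine X hcover) := by
  ext τ
  simp only [mem_filter, mem_univ, true_and, mem_image, Fintype.mem_piFinset, mem_pi]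
  constructor
  · rintro ⟨f, hf, rfl⟩
    exact ⟨fun i => f i (mem_univ i), fun i => hf i trivial, rfl⟩
  · rintro ⟨f, hf, rfl⟩
    exact ⟨fun i _ => f i, fun i _ => hf i, rfl⟩

theorem sum_image_combine_prod {M : Type*} [CommSemiring M] [Fintype V] [DecidableEq V]
    [Fintype ι] [DecidableEq ι] (W : V → Bool → M) (S : ∀ i : ι, Finset ({v // v ∈ X i} → Bool)) :
    ∑ τ ∈ (Fintype.piFinset S).image (combine X hcover), ∏ v, W v (τ v) =
      ∏ i, ∑ g ∈ S i, ∏ v : {v // v ∈ X i}, W v (g v) := by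
  rw [sum_image fun f _ g _ h => combine_injective hdisj hcover h, prod_univ_sum]
  exact sum_congr rfl fun f _ => prod_combine hdisj hcover W f

end Partition

theorem stmt_14_general {V : Type*} [Fintype V] [DecidableEq V]
    {ι : Type*} [Fintype ι] [DecidableEq ι]
    (X : ι → Finset V) (hdisj : Pairwise (fun i j => Disjoint (X i) (X j)))
    (hcover : ∀ v : V, ∃ i : ι, v ∈ X i)
    (μ : ∀ i : ι, ({v // v ∈ X i} → Bool) → ℝ)
    (p : (V → Bool) → ℝ)
    (hp : ∀ τ : V → Bool,
      p τ = ∑ f ∈ Finset.univ.filter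
              (fun f : ∀ i : ι, {v // v ∈ X i} → Bool => combine X hcover f = τ),
              ∏ i : ι, μ i (f i)) :
    Function.Injective (combine X hcover) ∧
    (∀ f : ∀ i : ι, {v // v ∈ X i} → Bool,
      p (combine X hcover f) = ∏ i : ι, μ i (f i)) ∧
    (∀ (W : V → Bool → ℝ), (∀ v b, 0 < W v b) →
      ∀ (S : ∀ i : ι, Finset ({v // v ∈ X i} → Bool)), (∀ i, (S i).Nonempty) →
      (∀ i g, μ i g =
        if g ∈ S i then
          (∏ v : {v // v ∈ X i}, W v.1 (g v)) /
            ∑ g' ∈ S i, ∏ v : {v // v ∈ X i}, W v.1 (g' v)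
        else 0) →
      ∀ τ ∈ Finset.univ.filter
          (fun τ : V → Bool =>
            ∃ f ∈ Finset.univ.pi (fun i : ι => S i),
              combine X hcover (fun i => f i (Finset.mem_univ i)) = τ),
        p τ = (∏ v : V, W v (τ v)) /
          ∑ τ' ∈ Finset.univ.filter
              (fun τ' : V → Bool =>
                ∃ f ∈ Finset.univ.pi (fun i : ι => S i),
                  combine X hcover (fun i => f i (Finset.mem_univ i)) = τ'),
            ∏ v : V, W v (τ' v)) := by
  have hpush : ∀ f, p (combine X hcover f) = ∏ i, μ i (f i) := fun f => by
    rw [hp, filter_combine_eq_combine hdisj hcover, sum_singleton]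
  refine ⟨combine_injective hdisj hcover, hpush, fun W _ S _ hμ τ hτ => ?_⟩
  rw [filter_exists_pi_combine_eq hcover] at hτ ⊢
  obtain ⟨f, hf, rfl⟩ := mem_image.mp hτ
  rw [hpush, prod_combine hdisj hcover, sum_image_combine_prod hdisj hcover, ← prod_div_distrib]
  exact prod_congr rfl fun i _ => by rw [hμ, if_pos (Fintype.mem_piFinset.mp hf i)]

/-- Correctness of INC at a conjunction node with `k` children: for pairwise
disjoint variable sets `X i` covering `V`, the combination map is injective;
the pushforward of the product of the child distributions assigns to each
combined assignment the product of the children's probabilities; and if each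
child distribution is `W`-proportional on its satisfying set `S i`, the
pushforward is `W`-proportional on the combined satisfying set `S`. -/
theorem stmt_14 {V : Type*} [Fintype V] [DecidableEq V]
    {ι : Type*} [Fintype ι] [DecidableEq ι]
    (X : ι → Finset V) (hdisj : Pairwise (fun i j => Disjoint (X i) (X j)))
    (hcover : ∀ v : V, ∃ i : ι, v ∈ X i)
    (μ : ∀ i : ι, ({v // v ∈ X i} → Bool) → ℝ)
    (hμ0 : ∀ i g, 0 ≤ μ i g) (hμ1 : ∀ i, ∑ g : {v // v ∈ X i} → Bool, μ i g = 1)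
    (p : (V → Bool) → ℝ)
    (hp : ∀ τ : V → Bool,
      p τ = ∑ f ∈ Finset.univ.filter
              (fun f : ∀ i : ι, {v // v ∈ X i} → Bool => combine X hcover f = τ),
              ∏ i : ι, μ i (f i)) :
    Function.Injective (combine X hcover) ∧
    (∀ f : ∀ i : ι, {v // v ∈ X i} → Bool,
      p (combine X hcover f) = ∏ i : ι, μ i (f i)) ∧
    (∀ (W : V → Bool → ℝ), (∀ v b, 0 < W v b) →
      ∀ (S : ∀ i : ι, Finset ({v // v ∈ X i} → Bool)), (∀ i, (S i).Nonempty) →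
      (∀ i g, μ i g =
        if g ∈ S i then
          (∏ v : {v // v ∈ X i}, W v.1 (g v)) /
            ∑ g' ∈ S i, ∏ v : {v // v ∈ X i}, W v.1 (g' v)
        else 0) →
      ∀ τ ∈ Finset.univ.filter
          (fun τ : V → Bool =>
            ∃ f ∈ Finset.univ.pi (fun i : ι => S i),
              combine X hcover (fun i => f i (Finset.mem_univ i)) = τ),
        p τ = (∏ v : V, W v (τ v)) /
          ∑ τ' ∈ Finset.univ.filter
              (fun τ' : V → Bool =>
                ∃ f ∈ Finset.univ.pi (fun i : ι => S i),
                  combine X hcover (fun i => f i (Finset.mem_univ i)) = τ'),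
            ∏ v : V, W v (τ' v)) :=
  stmt_14_general X hdisj hcover μ p hp
end
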